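/- arXiv:1106.2203 — 12 statements merged into one kernel-verified Lean document; each statement's English description precedes it below -/
import Mathlib

section
/- If L is an algebraic lattice, then the lattice Sp(L) of algebraic subsets of L is dually isomorphic to the congruence lattice of the join semilattice L_c of compact elements of L (with zero). -/
open CompleteLattice

variable {L : Type*} [CompleteLattice L] [IsCompactlyGenerated L]

/-- An algebraic subset of a complete lattice: closed under arbitrary meets and
joins of nonempty up-directed subsets. -/
def IsAlgebraicSubset (A : Set L) : Prop :=
  (∀ T ⊆ A, sInf T ∈ A) ∧
  (∀ T ⊆ A, T.Nonempty → DirectedOn (· ≤ ·) T → sSup T ∈ A)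

/-- The lattice of algebraic subsets, ordered by inclusion. -/
def Sp (L : Type*) [CompleteLattice L] : Type _ :=
  {A : Set L // IsAlgebraicSubset A}

instance : PartialOrder (Sp L) := Subtype.partialOrder _

/-- The join semilattice of compact elements of `L`. -/
def Compacts (L : Type*) [CompleteLattice L] : Type _ :=
  {x : L // IsCompactElement x}

instance : PartialOrder (Compacts L) := Subtype.partialOrder _

instance : SemilatticeSup (Compacts L) where
  __ := (inferInstance : PartialOrder (Compacts L))
  sup x y := ⟨x.1 ⊔ y.1, by
    have h := isCompactElement_finsetSup (f := fun b : Bool => if b then x.1 else y.1)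
      ({true, false} : Finset Bool) (by rintro (_|_) _ <;> simp [x.2, y.2])
    simpa [Finset.sup_insert, sup_comm] using h⟩
  le_sup_left x y := show x.1 ≤ x.1 ⊔ y.1 from le_sup_left
  le_sup_right x y := show y.1 ≤ x.1 ⊔ y.1 from le_sup_right
  sup_le x y z h₁ h₂ := show x.1 ⊔ y.1 ≤ z.1 from sup_le h₁ h₂

instance : OrderBot (Compacts L) where
  bot := ⟨⊥, by
    simpa using isCompactElement_finsetSup (f := fun b : Bool => (⊥ : L))
      (∅ : Finset Bool) (by simp)⟩
  bot_le x := show (⊥ : L) ≤ x.1 from bot_le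

/-- A congruence of a join semilattice with zero. -/
def IsSemilatticeCong {S : Type*} [SemilatticeSup S] [OrderBot S]
    (θ : S → S → Prop) : Prop :=
  Equivalence θ ∧ ∀ x y z : S, θ x y → θ (x ⊔ z) (y ⊔ z)

/-- The congruence lattice of a join semilattice with zero, ordered by inclusion. -/
def ConSL (S : Type*) [SemilatticeSup S] [OrderBot S] : Type _ :=
  {θ : S → S → Prop // IsSemilatticeCong θ}

instance {S : Type*} [SemilatticeSup S] [OrderBot S] : PartialOrder (ConSL S) :=
  Subtype.partialOrder _

lemma isCompact_sup {x y : L} (hx : IsCompactElement x) (hy : IsCompactElement y) :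
    IsCompactElement (x ⊔ y) := by
  let a : Compacts L := ⟨x, hx⟩
  let b : Compacts L := ⟨y, hy⟩
  exact (a ⊔ b).2

/-- The congruence associated to a subset of `L`. -/
def conOf (A : Set L) : Compacts L → Compacts L → Prop :=
  fun x y => ∀ a ∈ A, (x.1 ≤ a ↔ y.1 ≤ a)

lemma conOf_isCong (A : Set L) : IsSemilatticeCong (conOf A) := by
  constructor
  · refine ⟨fun x a _ => Iff.rfl, fun h a ha => (h a ha).symm, fun h h' a ha => (h a ha).trans (h' a ha)⟩
  · intro x y z h a ha
    show x.1 ⊔ z.1 ≤ a ↔ y.1 ⊔ z.1 ≤ a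
    rw [sup_le_iff, sup_le_iff, h a ha]

/-- The algebraic subset associated to a congruence. -/
def setOfCon (θ : Compacts L → Compacts L → Prop) : Set L :=
  { a | ∀ x y : Compacts L, θ x y → (x.1 ≤ a ↔ y.1 ≤ a) }

lemma setOfCon_isAlg {θ : Compacts L → Compacts L → Prop}
    (hθ : IsSemilatticeCong θ) : IsAlgebraicSubset (setOfCon θ) := by
  constructor
  · intro T hT x y hxy
    simp only [le_sInf_iff]
    exact forall₂_congr fun a ha => hT ha x y hxy
  · intro T hT hne hdir x y hxy
    have key : ∀ u v : Compacts L, θ u v → u.1 ≤ sSup T → v.1 ≤ sSup T := by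
      intro u v huv hu
      obtain ⟨t, ht, hut⟩ :=
        (isCompactElement_iff_le_of_directed_sSup_le L u.1).mp u.2 T hne hdir hu
      exact le_trans ((hT ht u v huv).mp hut) (le_sSup ht)
    exact ⟨key x y hxy, key y x (hθ.1.symm hxy)⟩

lemma conOf_setOfCon {θ : Compacts L → Compacts L → Prop}
    (hθ : IsSemilatticeCong θ) : conOf (setOfCon θ) = θ := by
  obtain ⟨hequiv, hcong⟩ := hθ
  funext x y
  ext
  constructor
  · -- the hard direction
    intro h
    -- the ideal of elements θ-below x
    set I : Set L := {w | ∃ z : Compacts L, θ (z ⊔ x) x ∧ z.1 = w} with hI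
    have memI : ∀ z : Compacts L, z.1 ∈ I ↔ θ (z ⊔ x) x := by
      intro z
      constructor
      · rintro ⟨w, hw, hwz⟩
        have : w = z := Subtype.ext hwz
        rwa [← this]
      · intro hz; exact ⟨z, hz, rfl⟩
    have hxI : x.1 ∈ I := (memI x).mpr (by rw [sup_idem]; exact hequiv.refl x)
    have hdirI : DirectedOn (· ≤ ·) I := by
      rintro _ ⟨z, hz, rfl⟩ _ ⟨w, hw, rfl⟩
      refine ⟨(z ⊔ w).1, (memI _).mpr ?_, le_sup_left, le_sup_right⟩
      have h1 : θ (z ⊔ x ⊔ w) (x ⊔ w) := hcong _ _ _ hz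
      have h2 : θ (w ⊔ x) x := hw
      have e1 : z ⊔ x ⊔ w = z ⊔ w ⊔ x := by
        rw [sup_right_comm]
      have e2 : x ⊔ w = w ⊔ x := sup_comm _ _
      rw [e1, e2] at h1
      exact hequiv.trans h1 h2
    set a : L := sSup I with ha
    have hdown : ∀ u : Compacts L, u.1 ≤ a ↔ θ (u ⊔ x) x := by
      intro u
      constructor
      · intro hu
        obtain ⟨t, ht, hut⟩ :=
          (isCompactElement_iff_le_of_directed_sSup_le L u.1).mp u.2 I ⟨x.1, hxI⟩ hdirI hu
        obtain ⟨z, hz, rfl⟩ := ht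
        have huz : u ≤ z := hut
        have h1 : θ (z ⊔ x ⊔ u) (x ⊔ u) := hcong _ _ _ hz
        have e1 : z ⊔ x ⊔ u = z ⊔ x := by
          rw [sup_right_comm, sup_eq_left.mpr huz]
        rw [e1] at h1
        have h2 : θ (u ⊔ x) (z ⊔ x) := by
          rw [sup_comm x u] at h1
          exact hequiv.symm h1
        exact hequiv.trans h2 hz
      · intro hu
        exact le_sSup ((memI u).mpr hu)
    have haA : a ∈ setOfCon θ := by
      intro u v huv
      rw [hdown u, hdown v]
      constructor
      · intro h1
        have := hcong _ _ x huv
        exact hequiv.trans (hequiv.symm this) h1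
      · intro h1
        have := hcong _ _ x huv
        exact hequiv.trans this h1
    -- now use the hypothesis with a, and with the symmetric ideal
    have hxa : x.1 ≤ a := le_sSup hxI
    have hya : y.1 ≤ a := (h a haA).mp hxa
    have h1 : θ (y ⊔ x) x := (hdown y).mp hya
    -- symmetric construction for y
    set J : Set L := {w | ∃ z : Compacts L, θ (z ⊔ y) y ∧ z.1 = w} with hJ
    have memJ : ∀ z : Compacts L, z.1 ∈ J ↔ θ (z ⊔ y) y := by
      intro z
      constructor
      · rintro ⟨w, hw, hwz⟩
        have : w = z := Subtype.ext hwz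
        rwa [← this]
      · intro hz; exact ⟨z, hz, rfl⟩
    have hyJ : y.1 ∈ J := (memJ y).mpr (by rw [sup_idem]; exact hequiv.refl y)
    have hdirJ : DirectedOn (· ≤ ·) J := by
      rintro _ ⟨z, hz, rfl⟩ _ ⟨w, hw, rfl⟩
      refine ⟨(z ⊔ w).1, (memJ _).mpr ?_, le_sup_left, le_sup_right⟩
      have h1' : θ (z ⊔ y ⊔ w) (y ⊔ w) := hcong _ _ _ hz
      have e1 : z ⊔ y ⊔ w = z ⊔ w ⊔ y := by rw [sup_right_comm]
      have e2 : y ⊔ w = w ⊔ y := sup_comm _ _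
      rw [e1, e2] at h1'
      exact hequiv.trans h1' hw
    set b : L := sSup J with hb
    have hdownJ : ∀ u : Compacts L, u.1 ≤ b ↔ θ (u ⊔ y) y := by
      intro u
      constructor
      · intro hu
        obtain ⟨t, ht, hut⟩ :=
          (isCompactElement_iff_le_of_directed_sSup_le L u.1).mp u.2 J ⟨y.1, hyJ⟩ hdirJ hu
        obtain ⟨z, hz, rfl⟩ := ht
        have huz : u ≤ z := hut
        have h1' : θ (z ⊔ y ⊔ u) (y ⊔ u) := hcong _ _ _ hz
        have e1 : z ⊔ y ⊔ u = z ⊔ y := by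
          rw [sup_right_comm, sup_eq_left.mpr huz]
        rw [e1] at h1'
        have h2 : θ (u ⊔ y) (z ⊔ y) := by
          rw [sup_comm y u] at h1'
          exact hequiv.symm h1'
        exact hequiv.trans h2 hz
      · intro hu
        exact le_sSup ((memJ u).mpr hu)
    have hbA : b ∈ setOfCon θ := by
      intro u v huv
      rw [hdownJ u, hdownJ v]
      constructor
      · intro h1'
        have := hcong _ _ y huv
        exact hequiv.trans (hequiv.symm this) h1'
      · intro h1'
        have := hcong _ _ y huv
        exact hequiv.trans this h1'
    have hyb : y.1 ≤ b := le_sSup hyJ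
    have hxb : x.1 ≤ b := (h b hbA).mpr hyb
    have h2 : θ (x ⊔ y) y := (hdownJ x).mp hxb
    -- combine
    have h3 : θ x (y ⊔ x) := hequiv.symm h1
    have h4 : θ (y ⊔ x) y := by rw [sup_comm] at h2; exact h2
    exact hequiv.trans h3 h4
  · intro hxy a ha
    exact ha x y hxy

lemma setOfCon_conOf {A : Set L} (hA : IsAlgebraicSubset A) :
    setOfCon (conOf A) = A := by
  ext b
  constructor
  · intro hb
    -- b is a directed sup of elements of A
    classical
    set π : L → L := fun x => sInf {a ∈ A | x ≤ a} with hπ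
    have hπA : ∀ x, π x ∈ A := fun x => hA.1 _ (fun a ha => ha.1)
    have hleπ : ∀ x, x ≤ π x := fun x => le_sInf fun a ha => ha.2
    have hπle : ∀ x, IsCompactElement x → x ≤ b → π x ≤ b := by
      intro x hx hxb
      rw [le_iff_compact_le_imp]
      intro y hy hyπ
      have hcon : conOf A (⟨x, hx⟩ ⊔ ⟨y, hy⟩) ⟨x, hx⟩ := by
        intro a ha
        show x ⊔ y ≤ a ↔ x ≤ a
        constructor
        · intro h; exact le_trans le_sup_left h
        · intro h
          have : π x ≤ a := sInf_le ⟨ha, h⟩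
          exact sup_le h (le_trans hyπ this)
      have := hb _ _ hcon
      show y ≤ b
      have hxyb : x ⊔ y ≤ b := this.mpr hxb
      exact le_trans le_sup_right hxyb
    set D : Set L := π '' {x | IsCompactElement x ∧ x ≤ b} with hD
    have hDA : D ⊆ A := by rintro _ ⟨x, _, rfl⟩; exact hπA x
    have hDne : D.Nonempty := ⟨π ⊥, ⟨⊥, ⟨(⊥ : Compacts L).2, bot_le⟩, rfl⟩⟩
    have hmono : ∀ x y : L, x ≤ y → π x ≤ π y := by
      intro x y hxy
      exact sInf_le_sInf fun a ha => ⟨ha.1, le_trans hxy ha.2⟩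
    have hDdir : DirectedOn (· ≤ ·) D := by
      rintro _ ⟨x, ⟨hx, hxb⟩, rfl⟩ _ ⟨y, ⟨hy, hyb⟩, rfl⟩
      have hxy : IsCompactElement (x ⊔ y) := isCompact_sup hx hy
      exact ⟨π (x ⊔ y), ⟨x ⊔ y, ⟨hxy, sup_le hxb hyb⟩, rfl⟩,
        hmono _ _ le_sup_left, hmono _ _ le_sup_right⟩
    have hsup : sSup D = b := by
      apply le_antisymm
      · apply _root_.sSup_le
        rintro _ ⟨x, ⟨hx, hxb⟩, rfl⟩
        exact hπle x hx hxb
      · rw [le_iff_compact_le_imp]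
        intro c hc hcb
        exact le_trans (hleπ c) (le_sSup ⟨c, ⟨hc, hcb⟩, rfl⟩)
    have := hA.2 D hDA hDne hDdir
    rwa [hsup] at this
  · intro hb x y hxy
    exact hxy b hb

/-- If `L` is an algebraic lattice, then `Sp L` is dually isomorphic to the
congruence lattice of the semilattice of compact elements of `L`. -/
theorem sp_dual_iso_con_compacts :
    Nonempty (Sp L ≃o (ConSL (Compacts L))ᵒᵈ) := by
  refine ⟨{
    toFun := fun A => OrderDual.toDual ⟨conOf A.1, conOf_isCong A.1⟩
    invFun := fun θ => ⟨setOfCon (OrderDual.ofDual θ).1,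
      setOfCon_isAlg (OrderDual.ofDual θ).2⟩
    left_inv := fun A => Subtype.ext (setOfCon_conOf A.2)
    right_inv := fun θ => by
      apply OrderDual.toDual.injective
      exact Subtype.ext (conOf_setOfCon (OrderDual.ofDual θ).2)
    map_rel_iff' := by
      intro A B
      show (⟨conOf B.1, _⟩ : ConSL (Compacts L)) ≤ ⟨conOf A.1, _⟩ ↔ A ≤ B
      rw [Subtype.mk_le_mk]
      constructor
      · intro h
        show A.1 ⊆ B.1
        rw [← setOfCon_conOf A.2, ← setOfCon_conOf B.2]
        intro a ha x y hxy
        exact ha x y (h x y hxy)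
      · intro hAB x y hxy a ha
        exact hxy a (hAB ha) }⟩
end

section
/- Let S = ⟨S,+,0⟩ be a join semilattice with 0 and let H be an algebraic subset of the ideal lattice of S (closed under arbitrary intersections and up-directed unions, containing S itself). Then H equals the set of ρ(H)-closed ideals, where x ρ(H) y iff x and y lie in the same members of H. -/
variable {S : Type*} [SemilatticeSup S] [OrderBot S]

/-- `ρ H` relates `x` and `y` iff they lie in exactly the same ideals of `H`. -/
def rhoMap (H : Set (Order.Ideal S)) : S → S → Prop :=
  fun x y => ∀ I ∈ H, (x ∈ I ↔ y ∈ I)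

/-- `H` is an algebraic subset of the ideal lattice: it contains the ideal `S`
itself, and is closed under arbitrary (nonempty) intersections and under unions
of nonempty up-directed subfamilies. -/
def IsAlgebraicIdealFamily (H : Set (Order.Ideal S)) : Prop :=
  (∃ J ∈ H, (J : Set S) = Set.univ) ∧
  (∀ T ⊆ H, T.Nonempty → ∃ J ∈ H, (J : Set S) = ⋂ I ∈ T, (I : Set S)) ∧
  (∀ T ⊆ H, T.Nonempty → DirectedOn (· ≤ ·) T →
      ∃ J ∈ H, (J : Set S) = ⋃ I ∈ T, (I : Set S))

/-- If `H` is an algebraic subset of the ideal lattice of a join semilattice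
with zero, then `H` is exactly the set of `ρ(H)`-closed ideals. -/
theorem algebraic_family_eq_rho_closed (H : Set (Order.Ideal S))
    (hH : IsAlgebraicIdealFamily H) :
    H = {J : Order.Ideal S | ∀ x y, rhoMap H x y → (x ∈ J ↔ y ∈ J)} := by
  obtain ⟨⟨U, hU, hUuniv⟩, hInt, hUnion⟩ := hH
  have hUmem : ∀ s : S, s ∈ U := fun s => by
    have : s ∈ (U : Set S) := by rw [hUuniv]; trivial
    exact this
  ext J
  constructor
  · intro hJ x y hxy
    exact hxy J hJ
  · intro hJ
    simp only [Set.mem_setOf_eq] at hJ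
    -- for each s, the smallest member of H containing s
    have key : ∀ s : S, ∃ K ∈ H, (K : Set S) = ⋂ I ∈ {I ∈ H | s ∈ I}, (I : Set S) := by
      intro s
      exact hInt _ (fun I hI => hI.1) ⟨U, hU, hUmem s⟩
    choose K hKH hKcoe using key
    have hsK : ∀ s : S, s ∈ K s := by
      intro s
      have : s ∈ (K s : Set S) := by
        rw [hKcoe]
        exact Set.mem_iInter₂.2 fun I hI => hI.2
      exact this
    have hKmin : ∀ s : S, ∀ I ∈ H, s ∈ I → (K s : Set S) ⊆ I := by
      intro s I hI hsI
      rw [hKcoe]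
      exact Set.iInter₂_subset I ⟨hI, hsI⟩
    -- K s ⊆ J for s ∈ J
    have hKJ : ∀ s ∈ J, (K s : Set S) ⊆ (J : Set S) := by
      intro s hs y hy
      have hrho : rhoMap H (y ⊔ s) s := by
        intro I hI
        constructor
        · intro h
          exact I.lower le_sup_right h
        · intro h
          exact I.sup_mem (hKmin s I hI h hy) h
      have : y ⊔ s ∈ J := (hJ _ _ hrho).2 hs
      exact J.lower le_sup_left this
    -- the family of K s for s ∈ J is directed with union J
    set T : Set (Order.Ideal S) := K '' (J : Set S) with hT
    have hTH : T ⊆ H := by rintro _ ⟨s, _, rfl⟩; exact hKH s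
    have hTne : T.Nonempty := ⟨K ⊥, ⊥, J.bot_mem, rfl⟩
    have hKmono : ∀ s t : S, s ≤ t → (K s : Set S) ⊆ (K t : Set S) := by
      intro s t hst
      exact hKmin s (K t) (hKH t) ((K t).lower hst (hsK t))
    have hTdir : DirectedOn (· ≤ ·) T := by
      rintro _ ⟨s, hs, rfl⟩ _ ⟨t, ht, rfl⟩
      refine ⟨K (s ⊔ t), ⟨s ⊔ t, J.sup_mem hs ht, rfl⟩, ?_, ?_⟩
      · exact hKmono s (s ⊔ t) le_sup_left
      · exact hKmono t (s ⊔ t) le_sup_right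
    obtain ⟨K', hK'H, hK'coe⟩ := hUnion T hTH hTne hTdir
    have : (K' : Set S) = (J : Set S) := by
      rw [hK'coe]
      apply subset_antisymm
      · refine Set.iUnion₂_subset ?_
        rintro _ ⟨s, hs, rfl⟩
        exact hKJ s hs
      · intro s hs
        exact Set.mem_iUnion₂.2 ⟨K s, ⟨s, hs, rfl⟩, hsK s⟩
    have : K' = J := SetLike.coe_injective this
    rwa [this] at hK'H
end

section
/- Let S be a join semilattice with 0 and operators F, and let I be an F-closed ideal of S. Then the relation η(I) defined by x η(I) y iff x + i = y + i for some i ∈ I is the least congruence of ⟨S,+,0,F⟩ whose 0-class is I. -/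
variable {S : Type*} [SemilatticeSup S] [OrderBot S]

/-- An operator on a join semilattice with zero: a unary `(⊔,0)`-endomorphism. -/
def IsOperator (f : S → S) : Prop :=
  (∀ x y : S, f (x ⊔ y) = f x ⊔ f y) ∧ f ⊥ = ⊥

/-- A congruence of a join semilattice with zero and a set `F` of operators. -/
def IsCong (F : Set (S → S)) (θ : S → S → Prop) : Prop :=
  Equivalence θ ∧ (∀ x y z : S, θ x y → θ (x ⊔ z) (y ⊔ z)) ∧
    ∀ f ∈ F, ∀ x y, θ x y → θ (f x) (f y)

/-- The relation `η(I)` : `x η(I) y` iff `x + i = y + i` for some `i ∈ I`. -/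
def etaRel (I : Order.Ideal S) : S → S → Prop :=
  fun x y => ∃ i ∈ I, x ⊔ i = y ⊔ i

/-- If `I` is an `F`-closed ideal, then `η(I)` is the least congruence of the
semilattice with operators whose `0`-class is `I`. -/
theorem etaRel_least_cong (F : Set (S → S)) (hF : ∀ f ∈ F, IsOperator f)
    (I : Order.Ideal S) (hI : ∀ f ∈ F, ∀ x ∈ I, f x ∈ I) :
    IsCong F (etaRel I) ∧ (∀ x, etaRel I x ⊥ ↔ x ∈ I) ∧
      ∀ θ : S → S → Prop, IsCong F θ → (∀ x, θ x ⊥ ↔ x ∈ I) →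
        ∀ x y, etaRel I x y → θ x y := by
  refine ⟨⟨⟨fun x => ⟨⊥, I.bot_mem, rfl⟩, ?_, ?_⟩, ?_, ?_⟩, ?_, ?_⟩
  · rintro x y ⟨i, hi, h⟩; exact ⟨i, hi, h.symm⟩
  · rintro x y z ⟨i, hi, h⟩ ⟨j, hj, h'⟩
    refine ⟨i ⊔ j, I.sup_mem hi hj, ?_⟩
    calc x ⊔ (i ⊔ j) = (x ⊔ i) ⊔ j := by rw [sup_assoc]
      _ = (y ⊔ i) ⊔ j := by rw [h]
      _ = (y ⊔ j) ⊔ i := by rw [sup_assoc, sup_comm i j, ← sup_assoc]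
      _ = (z ⊔ j) ⊔ i := by rw [h']
      _ = z ⊔ (i ⊔ j) := by rw [sup_assoc, sup_comm j i]
  · rintro x y z ⟨i, hi, h⟩
    refine ⟨i, hi, ?_⟩
    rw [sup_assoc, sup_comm z i, ← sup_assoc, h, sup_assoc, sup_comm i z, ← sup_assoc]
  · rintro f hf x y ⟨i, hi, h⟩
    obtain ⟨hsup, _⟩ := hF f hf
    exact ⟨f i, hI f hf i hi, by rw [← hsup, ← hsup, h]⟩
  · intro x
    constructor
    · rintro ⟨i, hi, h⟩
      rw [bot_sup_eq] at h
      exact I.lower (h ▸ le_sup_left) hi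
    · intro hx
      exact ⟨x, hx, by rw [sup_idem, bot_sup_eq]⟩
  · rintro θ ⟨heq, hcomp, _⟩ h0 x y ⟨i, hi, h⟩
    have hi0 : θ i ⊥ := (h0 i).2 hi
    have key : ∀ z : S, θ (z ⊔ i) z := by
      intro z
      have := hcomp i ⊥ z hi0
      rwa [bot_sup_eq, sup_comm i z] at this
    exact heq.trans (heq.trans (heq.symm (key x)) (h ▸ heq.refl _)) (key y)
end

section
/- Let S be a join semilattice with 0 and operators F, let F† be the monoid generated by F (including the identity), and let I be an F-closed ideal. Then the relation τ(I), defined by x τ(I) y iff for all h ∈ F†, h(x) ∈ I ⟺ h(y) ∈ I, is the greatest congruence of ⟨S,+,0,F⟩ whose 0-class is I. -/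
variable {S : Type*} [SemilatticeSup S] [OrderBot S]

/-- Membership in the monoid `F†` generated by `F` (including the identity). -/
inductive InMonoid (F : Set (S → S)) : (S → S) → Prop
  | id : InMonoid F id
  | base (f : S → S) : f ∈ F → InMonoid F f
  | comp (f g : S → S) : InMonoid F f → InMonoid F g → InMonoid F (f ∘ g)

/-- The relation `τ(I)` : `x τ(I) y` iff for every `h ∈ F†`, `h x ∈ I ⟺ h y ∈ I`. -/
def tauRel (F : Set (S → S)) (I : Order.Ideal S) : S → S → Prop :=
  fun x y => ∀ h : S → S, InMonoid F h → (h x ∈ I ↔ h y ∈ I)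

/-- If `I` is an `F`-closed ideal, then `τ(I)` is the greatest congruence of
the semilattice with operators whose `0`-class is `I`. -/
theorem tauRel_greatest_cong (F : Set (S → S)) (hF : ∀ f ∈ F, IsOperator f)
    (I : Order.Ideal S) (hI : ∀ f ∈ F, ∀ x ∈ I, f x ∈ I) :
    IsCong F (tauRel F I) ∧ (∀ x, tauRel F I x ⊥ ↔ x ∈ I) ∧
      ∀ θ : S → S → Prop, IsCong F θ → (∀ x, θ x ⊥ ↔ x ∈ I) →
        ∀ x y, θ x y → tauRel F I x y := by
  have hop : ∀ h : S → S, InMonoid F h →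
      (∀ x y : S, h (x ⊔ y) = h x ⊔ h y) ∧ h ⊥ = ⊥ ∧ ∀ x ∈ I, h x ∈ I := by
    intro h hh
    induction hh with
    | id => exact ⟨fun _ _ => rfl, rfl, fun x hx => hx⟩
    | base f hf => exact ⟨(hF f hf).1, (hF f hf).2, hI f hf⟩
    | comp f g _ _ ihf ihg =>
      refine ⟨fun x y => ?_, ?_, fun x hx => ihf.2.2 _ (ihg.2.2 x hx)⟩
      · simp only [Function.comp_apply, ihg.1, ihf.1]
      · simp only [Function.comp_apply, ihg.2.1, ihf.2.1]
  refine ⟨⟨⟨fun x h _ => Iff.rfl, fun hxy h hh => (hxy h hh).symm,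
      fun hxy hyz h hh => (hxy h hh).trans (hyz h hh)⟩, ?_, ?_⟩, ?_, ?_⟩
  · intro x y z hxy h hh
    obtain ⟨hsup, -, -⟩ := hop h hh
    rw [hsup, hsup]
    constructor
    · intro hm
      exact I.sup_mem ((hxy h hh).1 (I.lower le_sup_left hm)) (I.lower le_sup_right hm)
    · intro hm
      exact I.sup_mem ((hxy h hh).2 (I.lower le_sup_left hm)) (I.lower le_sup_right hm)
  · intro f hf x y hxy h hh
    exact hxy (h ∘ f) (InMonoid.comp h f hh (InMonoid.base f hf))
  · intro x
    constructor
    · intro hx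
      exact (hx id InMonoid.id).2 I.bot_mem
    · intro hx h hh
      obtain ⟨-, hbot, hcl⟩ := hop h hh
      simp [hbot, hcl x hx, I.bot_mem]
  · intro θ hθ h0 x y hxy h hh
    have key : ∀ a b, θ a b → θ (h a) (h b) := by
      induction hh with
      | id => exact fun a b hab => hab
      | base f hf => exact fun a b hab => hθ.2.2 f hf a b hab
      | comp f g _ _ ihf ihg => exact fun a b hab => ihf _ _ (ihg a b hab)
    have k := key x y hxy
    constructor
    · intro hm
      exact (h0 (h y)).1 (hθ.1.trans (hθ.1.symm k) ((h0 (h x)).2 hm))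
    · intro hm
      exact (h0 (h x)).1 (hθ.1.trans k ((h0 (h y)).2 hm))
end

section
/- Let S = ⟨S,+,0,F⟩ be a semilattice with operators and define η on Con(S) by η(θ) = the congruence generated by collapsing the 0-class of θ to 0. Then η satisfies the distributivity property: η(α) ∨ (β ∧ γ) = (η(α) ∨ β) ∧ (η(α) ∨ γ) for all congruences α, β, γ. -/
variable {S : Type*} [SemilatticeSup S] [OrderBot S]

/-- The congruence generated by a relation `r`: the least congruence
containing `r`.  Joins in the congruence lattice are given by the congruence
generated by the union. -/
def congGen (F : Set (S → S)) (r : S → S → Prop) : S → S → Prop :=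
  fun x y => ∀ θ : S → S → Prop, IsCong F θ → (∀ a b, r a b → θ a b) → θ x y

/-- `η(α)` : `x η(α) y` iff there is `z` with `z α 0` and `x + z = y + z`;
this is the congruence generated by collapsing the `0`-class of `α` to `0`. -/
def etaCong (α : S → S → Prop) : S → S → Prop :=
  fun x y => ∃ z, α z ⊥ ∧ x ⊔ z = y ⊔ z

private lemma joinEta_eq (F : Set (S → S)) (hF : ∀ f ∈ F, IsOperator f)
    (α δ : S → S → Prop) (hα : IsCong F α) (hδ : IsCong F δ) :
    congGen F (fun x y => etaCong α x y ∨ δ x y) =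
      fun x y => ∃ z, α z ⊥ ∧ δ (x ⊔ z) (y ⊔ z) := by
  set R : S → S → Prop := fun x y => ∃ z, α z ⊥ ∧ δ (x ⊔ z) (y ⊔ z) with hR
  have hRcong : IsCong F R := by
    refine ⟨⟨fun x => ⟨⊥, hα.1.refl ⊥, hδ.1.refl _⟩,
      fun ⟨z, hz, h⟩ => ⟨z, hz, hδ.1.symm h⟩, ?_⟩, ?_, ?_⟩
    · rintro x y w ⟨z1, hz1, h1⟩ ⟨z2, hz2, h2⟩
      refine ⟨z1 ⊔ z2, ?_, ?_⟩
      · have := hα.2.1 z1 ⊥ z2 hz1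
        rw [bot_sup_eq] at this
        exact hα.1.trans this hz2
      · have h1' : δ (x ⊔ (z1 ⊔ z2)) (y ⊔ (z1 ⊔ z2)) := by
          simpa [sup_assoc, sup_comm, sup_left_comm] using hδ.2.1 _ _ z2 h1
        have h2' : δ (y ⊔ (z1 ⊔ z2)) (w ⊔ (z1 ⊔ z2)) := by
          simpa [sup_assoc, sup_comm, sup_left_comm] using hδ.2.1 _ _ z1 h2
        exact hδ.1.trans h1' h2'
    · rintro x y w ⟨z, hz, h⟩
      refine ⟨z, hz, ?_⟩
      simpa [sup_assoc, sup_comm, sup_left_comm] using hδ.2.1 _ _ w h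
    · rintro f hf x y ⟨z, hz, h⟩
      refine ⟨f z, ?_, ?_⟩
      · have := hα.2.2 f hf z ⊥ hz
        rwa [(hF f hf).2] at this
      · have := hδ.2.2 f hf _ _ h
        rwa [(hF f hf).1, (hF f hf).1] at this
  funext x y
  apply propext
  constructor
  · intro h
    refine h R hRcong ?_
    rintro a b (⟨z, hz, heq⟩ | hab)
    · exact ⟨z, hz, heq ▸ hδ.1.refl _⟩
    · exact ⟨⊥, hα.1.refl ⊥, hδ.2.1 a b ⊥ hab⟩
  · rintro ⟨z, hz, hxy⟩ θ hθ hgen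
    have h1 : θ x (x ⊔ z) := by
      refine hgen _ _ (Or.inl ⟨z, hz, ?_⟩)
      rw [sup_assoc, sup_idem]
    have h2 : θ (x ⊔ z) (y ⊔ z) := hgen _ _ (Or.inr hxy)
    have h3 : θ y (y ⊔ z) := by
      refine hgen _ _ (Or.inl ⟨z, hz, ?_⟩)
      rw [sup_assoc, sup_idem]
    exact hθ.1.trans (hθ.1.trans h1 h2) (hθ.1.symm h3)

/-- The natural equa-interior operator on `Con(S,+,0,F)` satisfies the
distributivity property (I6):
`η(α) ∨ (β ∧ γ) = (η(α) ∨ β) ∧ (η(α) ∨ γ)`, where joins are generated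
congruences and meets are intersections. -/
theorem eta_distributive (F : Set (S → S)) (hF : ∀ f ∈ F, IsOperator f)
    (α β γ : S → S → Prop) (hα : IsCong F α) (hβ : IsCong F β) (hγ : IsCong F γ) :
    congGen F (fun x y => etaCong α x y ∨ (β x y ∧ γ x y)) =
      fun x y => congGen F (fun a b => etaCong α a b ∨ β a b) x y ∧
        congGen F (fun a b => etaCong α a b ∨ γ a b) x y := by
  have hβγ : IsCong F (fun x y => β x y ∧ γ x y) := by
    refine ⟨⟨fun x => ⟨hβ.1.refl x, hγ.1.refl x⟩,
      fun ⟨h1, h2⟩ => ⟨hβ.1.symm h1, hγ.1.symm h2⟩,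
      fun ⟨h1, h2⟩ ⟨h3, h4⟩ => ⟨hβ.1.trans h1 h3, hγ.1.trans h2 h4⟩⟩,
      fun x y z ⟨h1, h2⟩ => ⟨hβ.2.1 x y z h1, hγ.2.1 x y z h2⟩,
      fun f hf x y ⟨h1, h2⟩ => ⟨hβ.2.2 f hf x y h1, hγ.2.2 f hf x y h2⟩⟩
  rw [joinEta_eq F hF α _ hα hβγ, joinEta_eq F hF α β hα hβ, joinEta_eq F hF α γ hα hγ]
  funext x y
  apply propext
  constructor
  · rintro ⟨z, hz, h1, h2⟩
    exact ⟨⟨z, hz, h1⟩, ⟨z, hz, h2⟩⟩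
  · rintro ⟨⟨z1, hz1, h1⟩, ⟨z2, hz2, h2⟩⟩
    refine ⟨z1 ⊔ z2, ?_, ?_, ?_⟩
    · have := hα.2.1 z1 ⊥ z2 hz1
      rw [bot_sup_eq] at this
      exact hα.1.trans this hz2
    · simpa [sup_assoc, sup_comm, sup_left_comm] using hβ.2.1 _ _ z2 h1
    · simpa [sup_assoc, sup_comm, sup_left_comm] using hγ.2.1 _ _ z1 h2
end

section
/- Let L be an algebraic lattice with a map η: L → L satisfying: η(x) ≤ x; x ≥ y implies η(x) ≥ η(y); η² = η; η(1) = 1; and if η(x) = u for all x in a set X then η(⋁X) = u. Define τ(x) = ⋁{z : η(z) = η(x)}. Then for any family (x_j), τ(⋀_j x_j) ≥ ⋀_j τ(x_j). -/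
/-- For an algebraic lattice `L` with a map `η` satisfying (I1)–(I5), the
associated map `τ(x) = ⋁{z : η z = η x}` satisfies
`τ(⋀ xⱼ) ≥ ⋀ τ(xⱼ)` for every family. -/
theorem tau_inf_ge {L : Type*} [CompleteLattice L] [IsCompactlyGenerated L]
    (η : L → L)
    (hI1 : ∀ x, η x ≤ x)
    (hI2 : ∀ x y : L, y ≤ x → η y ≤ η x)
    (hI3 : ∀ x, η (η x) = η x)
    (hI4 : η ⊤ = ⊤)
    (hI5 : ∀ (X : Set L) (u : L), X.Nonempty → (∀ x ∈ X, η x = u) → η (sSup X) = u)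
    (τ : L → L) (hτ : ∀ x, τ x = sSup {z | η z = η x})
    {ι : Sort*} (x : ι → L) :
    ⨅ j, τ (x j) ≤ τ (⨅ j, x j) := by
  have hmem : ∀ y : L, y ∈ {z | η z = η y} := fun y => rfl
  have hle : ∀ y : L, y ≤ τ y := fun y => by
    rw [hτ]; exact le_sSup (hmem y)
  have hητ : ∀ y : L, η (τ y) = η y := fun y => by
    rw [hτ]; exact hI5 _ _ ⟨y, hmem y⟩ (fun z hz => hz)
  set m := ⨅ j, τ (x j) with hm
  have h1 : η m ≤ ⨅ j, x j := by
    refine le_iInf fun j => ?_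
    calc η m ≤ η (τ (x j)) := hI2 _ _ (iInf_le _ j)
    _ = η (x j) := hητ _
    _ ≤ x j := hI1 _
  have h2 : (⨅ j, x j) ≤ m := le_iInf fun j => le_trans (iInf_le _ j) (hle _)
  have heq : η m = η (⨅ j, x j) := by
    apply le_antisymm
    · calc η m = η (η m) := (hI3 m).symm
      _ ≤ η (⨅ j, x j) := hI2 _ _ h1
    · exact hI2 _ _ h2
  rw [hτ]
  exact le_sSup heq
end

section
/- Let L be a coatomic lattice with an equa-interior operator η satisfying property (†): τ(x) ≤ τ(c) and η(z) ≤ c imply η(η(z) ∨ τ(x ∧ z)) ≤ c. Then L is bicoatomic: whenever p is a coatom with u ∧ v ≤ p and u ≰ p, v ≰ p, there exist coatoms c ≥ u and d ≥ v with c ∧ d ≤ p. -/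
/-- A coatomic lattice with an equa-interior operator satisfying property (†)
is bicoatomic. -/
theorem bicoatomic_of_dagger {L : Type*} [CompleteLattice L] [IsCompactlyGenerated L]
    (η : L → L)
    (hI1 : ∀ x, η x ≤ x)
    (hI2 : ∀ x y : L, y ≤ x → η y ≤ η x)
    (hI3 : ∀ x, η (η x) = η x)
    (hI4 : η ⊤ = ⊤)
    (hI5 : ∀ (X : Set L) (u : L), X.Nonempty → (∀ x ∈ X, η x = u) → η (sSup X) = u)
    (hI6 : ∀ x y z : L, η x ⊔ (y ⊓ z) = (η x ⊔ y) ⊓ (η x ⊔ z))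
    (τ : L → L) (hτ : ∀ x, τ x = sSup {z | η z = η x})
    (hdagger : ∀ x c z : L, τ x ≤ τ c → η z ≤ c → η (η z ⊔ τ (x ⊓ z)) ≤ c)
    (hcoatomic : ∀ x : L, x < ⊤ → ∃ c, IsCoatom c ∧ x ≤ c)
    (p u v : L) (hp : IsCoatom p) (huv : u ⊓ v ≤ p) (hu : ¬ u ≤ p) (hv : ¬ v ≤ p) :
    ∃ c d : L, IsCoatom c ∧ IsCoatom d ∧ u ≤ c ∧ v ≤ d ∧ c ⊓ d ≤ p := by
  classical
  have hmono : ∀ {a b : L}, a ≤ b → η a ≤ η b := fun {a b} h => hI2 b a h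
  have hτself : ∀ a : L, a ≤ τ a := fun a => by
    rw [hτ]; exact le_sSup rfl
  have hητ : ∀ a : L, η (τ a) = η a := fun a => by
    rw [hτ]; exact hI5 _ _ ⟨a, rfl⟩ fun x hx => hx
  have hτeq : ∀ a b : L, η a = η b → τ a = τ b := fun a b h => by
    rw [hτ, hτ, h]
  have hτtop : ∀ a : L, a ≠ ⊤ → τ a ≠ ⊤ := by
    intro a ha h
    have h1 := hητ a
    rw [h, hI4] at h1
    exact ha (top_le_iff.mp (h1.le.trans (hI1 a)))
  -- τ p = p
  have hτp : τ p = p := by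
    obtain ⟨c₁, hc₁, hpc₁⟩ := hcoatomic (τ p) (lt_top_iff_ne_top.mpr (hτtop p hp.1))
    have hpc : p ≤ c₁ := (hτself p).trans hpc₁
    have hcp : c₁ = p := by
      rcases eq_or_lt_of_le hpc with h | h
      · exact h.symm
      · exact absurd (hp.2 _ h) hc₁.1
    exact le_antisymm (hcp ▸ hpc₁) (hτself p)
  have hclass : ∀ w : L, η w = η p → w ≤ p := by
    intro w hw
    have h1 : w ≤ τ w := hτself w
    rwa [hτeq w p hw, hτp] at h1
  have hsqz : ∀ w : L, η p ≤ w → w ≤ p → η w = η p :=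
    fun w h1 h2 => le_antisymm (hmono h2) ((hI3 p).symm.le.trans (hmono h1))
  have hSQZ : ∀ w : L, η p ≤ w → ¬ w ≤ p → ¬ η w ≤ p := by
    intro w h1 h2 hc
    refine h2 (hclass w ?_)
    have h3 := hsqz (η w) ((hI3 p).symm.le.trans (hmono h1)) hc
    rwa [hI3] at h3
  have htopj : ∀ a : L, ¬ a ≤ p → a ⊔ p = ⊤ := fun a ha =>
    hp.2 _ (right_lt_sup.mpr ha)
  -- the main Zorn round
  have hround : ∀ g base : L, η p ≤ g → ¬ g ≤ p → base ⊓ g ≤ p →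
      ∃ e, IsCoatom e ∧ base ≤ e ∧ e ⊓ g ≤ p ∧ η p ≤ e := by
    intro g base hg hgp hbase
    set S : Set L := {e | base ≤ e ∧ e ⊓ g ≤ p} with hS
    have hzorn : ∀ c ⊆ S, IsChain (· ≤ ·) c → ∀ y ∈ c, ∃ ub ∈ S, ∀ z ∈ c, z ≤ ub := by
      intro c hcS hchain y hy
      refine ⟨sSup c, ⟨((hcS hy).1).trans (le_sSup hy), ?_⟩, fun z hz => le_sSup hz⟩
      rw [inf_comm, hchain.directedOn.inf_sSup_eq]
      exact iSup₂_le fun b hb => (inf_comm g b).trans_le (hcS hb).2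
    obtain ⟨e₀, hbe, hemax⟩ := zorn_le_nonempty₀ S hzorn base ⟨le_rfl, hbase⟩
    have he₁ : base ≤ e₀ := hemax.1.1
    have he₂ : e₀ ⊓ g ≤ p := hemax.1.2
    -- η p ≤ e₀
    have hηpe : η p ≤ e₀ := by
      have hmem : (e₀ ⊔ η p) ∈ S := by
        refine ⟨he₁.trans le_sup_left, ?_⟩
        calc (e₀ ⊔ η p) ⊓ g ≤ (η p ⊔ e₀) ⊓ (η p ⊔ g) :=
              inf_le_inf (sup_comm e₀ (η p)).le le_sup_right
          _ = η p ⊔ (e₀ ⊓ g) := (hI6 p e₀ g).symm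
          _ ≤ p := sup_le (hI1 p) he₂
      exact le_sup_right.trans (hemax.2 hmem le_sup_left)
    -- e₀ is τ-closed
    have hτe : τ e₀ = e₀ := by
      have hWp : τ e₀ ⊓ g ≤ p := by
        by_contra hW
        have h1 : η p ≤ τ e₀ ⊓ g := le_inf (hηpe.trans (hτself e₀)) hg
        have h2 : η (τ e₀ ⊓ g) ≤ p :=
          le_trans (le_inf ((hmono inf_le_left).trans ((hητ e₀).le.trans (hI1 e₀)))
            ((hI1 _).trans inf_le_right)) he₂
        exact hSQZ _ h1 hW h2
      have hmem : τ e₀ ∈ S := ⟨he₁.trans (hτself e₀), hWp⟩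
      exact le_antisymm (hemax.2 hmem (hτself e₀)) (hτself e₀)
    have hene : e₀ ≠ ⊤ := fun h => hgp (by simpa [h] using he₂)
    refine ⟨e₀, ⟨hene, ?_⟩, he₁, he₂, hηpe⟩
    intro b hb
    by_contra hbt
    obtain ⟨m, hm, hbm⟩ := hcoatomic b (lt_top_iff_ne_top.mpr hbt)
    have hem : e₀ ≤ m := (le_of_lt hb).trans hbm
    have hwp : ¬ m ⊓ g ≤ p := by
      intro hc
      have hbS : b ∈ S := ⟨he₁.trans hb.le, le_trans (inf_le_inf_right g hbm) hc⟩
      exact (lt_irrefl e₀) (lt_of_lt_of_le hb (hemax.2 hbS hb.le))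
    have hηw : ¬ η (m ⊓ g) ≤ p :=
      hSQZ _ (le_inf (hηpe.trans hem) hg) hwp
    have hd := hdagger e₀ m (m ⊓ g) (by rw [hτe]; exact hem.trans (hτself m))
      ((hI1 _).trans inf_le_left)
    have hkey : e₀ ⊓ (m ⊓ g) = e₀ ⊓ g := by
      rw [← inf_assoc, inf_eq_left.mpr hem]
    have hη1 : η (e₀ ⊓ g) = η p := hsqz _ (le_inf hηpe hg) he₂
    have hτ1 : τ (e₀ ⊓ g) = p := by rw [hτeq _ p hη1, hτp]
    rw [hkey, hτ1, htopj _ hηw, hI4] at hd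
    exact hm.1 (top_le_iff.mp hd)
  -- apply the round twice
  have hu'p : ¬ (u ⊔ η p) ≤ p := fun h => hu (le_sup_left.trans h)
  have hv'p : ¬ (v ⊔ η p) ≤ p := fun h => hv (le_sup_left.trans h)
  have hu'v' : (v ⊔ η p) ⊓ (u ⊔ η p) ≤ p := by
    calc (v ⊔ η p) ⊓ (u ⊔ η p) = (η p ⊔ v) ⊓ (η p ⊔ u) := by
          rw [sup_comm v, sup_comm u]
      _ = η p ⊔ (v ⊓ u) := (hI6 p v u).symm
      _ ≤ p := sup_le (hI1 p) ((inf_comm v u).trans_le huv)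
  obtain ⟨d₀, hd₀c, hvd₀, hdu, hηpd₀⟩ :=
    hround (u ⊔ η p) (v ⊔ η p) le_sup_right hu'p hu'v'
  have hd₀p : ¬ d₀ ≤ p := fun h => hv'p (hvd₀.trans h)
  obtain ⟨c₀, hc₀c, huc₀, hcd, _⟩ :=
    hround d₀ (u ⊔ η p) hηpd₀ hd₀p ((inf_comm (u ⊔ η p) d₀).trans_le hdu)
  exact ⟨c₀, d₀, hc₀c, hd₀c, le_sup_left.trans huc₀, le_sup_left.trans hvd₀, hcd⟩
end

section
/- Let L be a lattice with an equa-interior operator η satisfying property (I9): if η(x) ≤ c and ⋀_i τ(z_i) ≤ τ(c), then η(η(x) ∨ ⋀_i τ(x ∧ z_i)) ≤ c. Let x, a_i, z_i (i ∈ I) be coatoms with x ∧ z_i ≤ a_i properly for all i. If ⋀_i a_i ≰ x, then ⋀_i z_i ≰ x. -/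
universe u

/-- In a lattice with an equa-interior operator satisfying property (I9),
for coatoms `x`, `aᵢ`, `zᵢ` with `x ∧ zᵢ ≤ aᵢ` properly:
if `⋀ᵢ aᵢ ≰ x` then `⋀ᵢ zᵢ ≰ x`. -/
theorem inf_z_not_le_of_inf_a_not_le {L : Type u} [CompleteLattice L]
    (η : L → L)
    (hI1 : ∀ x, η x ≤ x)
    (hI2 : ∀ x y : L, y ≤ x → η y ≤ η x)
    (hI3 : ∀ x, η (η x) = η x)
    (hI4 : η ⊤ = ⊤)
    (hI5 : ∀ (X : Set L) (u : L), X.Nonempty → (∀ x ∈ X, η x = u) → η (sSup X) = u)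
    (hI6 : ∀ x y z : L, η x ⊔ (y ⊓ z) = (η x ⊔ y) ⊓ (η x ⊔ z))
    (τ : L → L) (hτ : ∀ x, τ x = sSup {z | η z = η x})
    (hI9 : ∀ (ι : Type u) (x c : L) (z : ι → L),
      η x ≤ c → (⨅ i, τ (z i)) ≤ τ c → η (η x ⊔ ⨅ i, τ (x ⊓ z i)) ≤ c)
    (I : Type u) (x : L) (a z : I → L)
    (hx : IsCoatom x) (ha : ∀ i, IsCoatom (a i)) (hz : ∀ i, IsCoatom (z i))
    (hle : ∀ i, x ⊓ z i ≤ a i) (hxa : ∀ i, ¬ x ≤ a i) (hza : ∀ i, ¬ z i ≤ a i)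
    (hna : ¬ (⨅ i, a i) ≤ x) :
    ¬ (⨅ i, z i) ≤ x := by
  intro h
  -- basic facts about τ
  have hself : ∀ u : L, u ≤ τ u := by
    intro u
    rw [hτ]
    exact le_sSup rfl
  have hητ : ∀ u : L, η (τ u) = η u := by
    intro u
    rw [hτ]
    exact hI5 _ _ ⟨u, rfl⟩ (fun w hw => hw)
  have hmem_le_tau : ∀ u w : L, η w = η u → w ≤ τ u := by
    intro u w hw
    rw [hτ]
    exact le_sSup hw
  -- τ of a coatom is itself
  have htauco : ∀ w : L, IsCoatom w → τ w = w := by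
    intro w hw
    rcases (hself w).lt_or_eq with hlt | heq
    · exfalso
      have htop : τ w = ⊤ := hw.2 _ hlt
      have : η w = ⊤ := by rw [← hητ w, htop, hI4]
      exact hw.1 (top_le_iff.mp (this ▸ hI1 w))
    · exact heq.symm
  -- step 2 : η (a i) = η (x ⊓ z i)
  have hstep2 : ∀ i, η (a i) = η (x ⊓ z i) := by
    intro i
    have key : η (a i) ⊔ (x ⊓ z i) = (η (a i) ⊔ x) ⊓ (η (a i) ⊔ z i) := hI6 (a i) x (z i)
    have hbound : (η (a i) ⊔ x) ⊓ (η (a i) ⊔ z i) ≤ a i := by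
      rw [← key]; exact sup_le (hI1 _) (hle i)
    have hxcase : η (a i) ⊔ x = x ∨ η (a i) ⊔ x = ⊤ := by
      rcases (le_sup_right : x ≤ η (a i) ⊔ x).lt_or_eq with hlt | heq
      · exact Or.inr (hx.2 _ hlt)
      · exact Or.inl heq.symm
    have hzcase : η (a i) ⊔ z i = z i ∨ η (a i) ⊔ z i = ⊤ := by
      rcases (le_sup_right : z i ≤ η (a i) ⊔ z i).lt_or_eq with hlt | heq
      · exact Or.inr ((hz i).2 _ hlt)
      · exact Or.inl heq.symm
    have hηa_le : η (a i) ≤ x ⊓ z i := by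
      rcases hxcase with hx1 | hx1 <;> rcases hzcase with hz1 | hz1
      · exact le_inf (sup_eq_right.mp hx1) (sup_eq_right.mp hz1)
      · exfalso
        apply hxa i
        calc x = (η (a i) ⊔ x) ⊓ (η (a i) ⊔ z i) := by rw [hx1, hz1, inf_top_eq]
        _ ≤ a i := hbound
      · exfalso
        apply hza i
        calc z i = (η (a i) ⊔ x) ⊓ (η (a i) ⊔ z i) := by rw [hx1, hz1, top_inf_eq]
        _ ≤ a i := hbound
      · exact absurd (by rw [hx1, hz1, inf_top_eq] at hbound; exact top_le_iff.mp hbound)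
          (ha i).1
    refine le_antisymm ?_ (hI2 _ _ (hle i))
    have := hI2 _ _ hηa_le
    rwa [hI3] at this
  -- step 3 : τ (x ⊓ z i) = a i
  have hstep3 : ∀ i, τ (x ⊓ z i) = a i := by
    intro i
    refine le_antisymm ?_ (hmem_le_tau _ _ (hstep2 i))
    have h1 : η (τ (x ⊓ z i)) = η (a i) := by rw [hητ, hstep2 i]
    have := hmem_le_tau (a i) _ h1
    rwa [htauco _ (ha i)] at this
  -- apply (I9) with c := x
  have h9 : η (η x ⊔ ⨅ i, τ (x ⊓ z i)) ≤ x := by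
    apply hI9 I x x z (hI1 x)
    have e1 : (⨅ i, τ (z i)) = ⨅ i, z i := iInf_congr fun i => htauco _ (hz i)
    rw [e1, htauco x hx]
    exact h
  have hq : (⨅ i, τ (x ⊓ z i)) = ⨅ i, a i := iInf_congr hstep3
  rw [hq] at h9
  set u := η x ⊔ ⨅ i, a i with hu
  -- η (u ⊓ x) = η x
  have h1 : η (u ⊓ x) = η x := by
    refine le_antisymm (hI2 _ _ inf_le_right) ?_
    have := hI2 (u ⊓ x) (η x) (le_inf le_sup_left (hI1 x))
    rwa [hI3] at this
  have h2 : η u ≤ η x := by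
    have := hI2 (u ⊓ x) (η u) (le_inf (hI1 u) h9)
    rwa [hI3, h1] at this
  have h3 : η x ≤ η u := by
    have := hI2 u (η x) le_sup_left
    rwa [hI3] at this
  have h5 : u ≤ x := by
    have := hmem_le_tau x u (le_antisymm h2 h3)
    rwa [htauco x hx] at this
  exact hna (le_trans le_sup_right h5)
end

section
/- Let S = ⟨S,∧,1⟩ be a meet semilattice with top element 1 and let ε be a distributive quasi-order on S. Then the collection of all ε-closed subsemilattices of S containing 1 forms a complete sublattice of the lattice Sub(S) of all subsemilattices containing 1. -/
variable {S : Type*} [SemilatticeInf S] [OrderTop S]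

/-- A distributive quasi-order on a meet semilattice with `1`. -/
def IsDistributiveQO (ε : S → S → Prop) : Prop :=
  Reflexive ε ∧ Transitive ε ∧
    (∀ c₁ c₂ d : S, ε (c₁ ⊓ c₂) d → ∃ d₁ d₂, ε c₁ d₁ ∧ ε c₂ d₂ ∧ d = d₁ ⊓ d₂) ∧
    (∀ d : S, ε ⊤ d → d = ⊤)

/-- A subsemilattice of `S` containing `1`. -/
def IsSub (X : Set S) : Prop :=
  ⊤ ∈ X ∧ ∀ a ∈ X, ∀ b ∈ X, a ⊓ b ∈ X

/-- An `ε`-closed subsemilattice containing `1`. -/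
def IsClosedSub (ε : S → S → Prop) (X : Set S) : Prop :=
  IsSub X ∧ ∀ c ∈ X, ∀ d, ε c d → d ∈ X

/-- The subsemilattice generated by a set `A`: the join of subsemilattices in
`Sub(S)` is the subsemilattice generated by the union. -/
def subGen (A : Set S) : Set S :=
  ⋂₀ {X : Set S | IsSub X ∧ A ⊆ X}

lemma subGen_isSub (A : Set S) : IsSub (subGen A) := by
  constructor
  · intro X hX; exact hX.1.1
  · intro a ha b hb X hX; exact hX.1.2 a (ha X hX) b (hb X hX)

lemma subset_subGen (A : Set S) : A ⊆ subGen A := by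
  intro a ha X hX; exact hX.2 ha

lemma subGen_le {A X : Set S} (hX : IsSub X) (hAX : A ⊆ X) : subGen A ⊆ X := by
  intro a ha; exact ha X ⟨hX, hAX⟩

/-- For a distributive quasi-order `ε` on a meet semilattice with `1`, the
`ε`-closed subsemilattices form a complete sublattice of `Sub(S)`:
they are closed under arbitrary intersections (meets in `Sub(S)`) and under
arbitrary joins of `Sub(S)` (generated subsemilattices of unions). -/
theorem closed_subs_complete_sublattice (ε : S → S → Prop)
    (hε : IsDistributiveQO ε) :
    (∀ T : Set (Set S), (∀ X ∈ T, IsClosedSub ε X) → IsClosedSub ε (⋂₀ T)) ∧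
    (∀ T : Set (Set S), (∀ X ∈ T, IsClosedSub ε X) → IsClosedSub ε (subGen (⋃₀ T))) := by
  obtain ⟨-, -, hdist, htop⟩ := hε
  constructor
  · intro T hT
    refine ⟨⟨fun X hX => (hT X hX).1.1, fun a ha b hb X hX =>
      (hT X hX).1.2 a (ha X hX) b (hb X hX)⟩, fun c hc d hcd X hX =>
      (hT X hX).2 c (hc X hX) d hcd⟩
  · intro T hT
    set A := ⋃₀ T
    set G := subGen A with hG
    set Y : Set S := {c | c ∈ G ∧ ∀ d, ε c d → d ∈ G} with hY
    have hYsub : IsSub Y := by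
      constructor
      · exact ⟨(subGen_isSub A).1, fun d hd => (htop d hd) ▸ (subGen_isSub A).1⟩
      · rintro a ⟨haG, ha⟩ b ⟨hbG, hb⟩
        refine ⟨(subGen_isSub A).2 a haG b hbG, fun d hd => ?_⟩
        obtain ⟨d₁, d₂, h1, h2, rfl⟩ := hdist a b d hd
        exact (subGen_isSub A).2 d₁ (ha d₁ h1) d₂ (hb d₂ h2)
    have hAY : A ⊆ Y := by
      rintro c ⟨X, hXT, hcX⟩
      refine ⟨subset_subGen A ⟨X, hXT, hcX⟩, fun d hd => ?_⟩
      exact subset_subGen A ⟨X, hXT, (hT X hXT).2 c hcX d hd⟩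
    have hGY : G ⊆ Y := subGen_le hYsub hAY
    exact ⟨subGen_isSub A, fun c hc d hcd => (hGY hc).2 d hcd⟩
end

section
/- Let S = ⟨S,∧,1⟩ be a meet semilattice with 1 and let T be a complete sublattice of Sub(S). Define c ρ d iff every member X of T containing c also contains d. Then ρ is a distributive quasi-order satisfying: c ρ d₁ and c ρ d₂ imply c ρ (d₁ ∧ d₂); and c ρ 1 for all c. Moreover T consists exactly of the ρ-closed subsemilattices of S. -/
variable {S : Type*} [SemilatticeInf S] [OrderTop S]

lemma subGen_subset {A X : Set S} (hX : IsSub X) (hA : A ⊆ X) : subGen A ⊆ X :=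
  fun _ ha => ha X ⟨hX, hA⟩

lemma subGen_eq_self {X : Set S} (hX : IsSub X) : subGen X = X :=
  (subGen_subset hX le_rfl).antisymm (subset_subGen X)

lemma isSub_singleton_top : IsSub ({⊤} : Set S) :=
  ⟨rfl, by rintro a rfl b rfl; simp⟩

lemma subGen_empty : subGen (∅ : Set S) = {⊤} :=
  (subGen_subset isSub_singleton_top (Set.empty_subset _)).antisymm
    (Set.singleton_subset_iff.2 fun _ hX => hX.1.1)

lemma IsSub.sInter {U : Set (Set S)} (hU : ∀ X ∈ U, IsSub X) : IsSub (⋂₀ U) :=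
  ⟨fun X hX => (hU X hX).1, fun _ ha _ hb X hX => (hU X hX).2 _ (ha X hX) _ (hb X hX)⟩

lemma IsSub.image2_inf {X₁ X₂ : Set S} (h₁ : IsSub X₁) (h₂ : IsSub X₂) :
    IsSub (Set.image2 (· ⊓ ·) X₁ X₂) := by
  refine ⟨⟨⊤, h₁.1, ⊤, h₂.1, top_inf_eq ⊤⟩, ?_⟩
  rintro _ ⟨a₁, ha₁, a₂, ha₂, rfl⟩ _ ⟨b₁, hb₁, b₂, hb₂, rfl⟩
  exact ⟨a₁ ⊓ b₁, h₁.2 _ ha₁ _ hb₁, a₂ ⊓ b₂, h₂.2 _ ha₂ _ hb₂, inf_inf_inf_comm a₁ b₁ a₂ b₂⟩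

lemma subGen_union_subset_image2_inf {X₁ X₂ : Set S} (h₁ : IsSub X₁) (h₂ : IsSub X₂) :
    subGen (X₁ ∪ X₂) ⊆ Set.image2 (· ⊓ ·) X₁ X₂ := by
  refine subGen_subset (h₁.image2_inf h₂) (Set.union_subset ?_ ?_)
  · exact fun x hx => ⟨x, hx, ⊤, h₂.1, inf_top_eq x⟩
  · exact fun x hx => ⟨⊤, h₁.1, x, hx, top_inf_eq x⟩

section closureIn

variable {α : Type*} {T : Set (Set α)}

def closureIn (T : Set (Set α)) (c : α) : Set α :=
  ⋂₀ {X | X ∈ T ∧ c ∈ X}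

lemma mem_closureIn {c d : α} : d ∈ closureIn T c ↔ ∀ X ∈ T, c ∈ X → d ∈ X :=
  ⟨fun hd X hX hc => hd X ⟨hX, hc⟩, fun hd X hX => hd X hX.1 hX.2⟩

lemma mem_closureIn_self (c : α) : c ∈ closureIn T c :=
  fun _ hX => hX.2

lemma closureIn_mem (hmeet : ∀ U ⊆ T, ⋂₀ U ∈ T) (c : α) : closureIn T c ∈ T :=
  hmeet _ fun _ hX => hX.1

end closureIn

section

variable {T : Set (Set S)}

lemma isSub_closureIn (hsub : ∀ X ∈ T, IsSub X) (c : S) : IsSub (closureIn T c) :=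
  IsSub.sInter fun X hX => hsub X hX.1

lemma exists_inf_of_mem_closureIn_inf (hsub : ∀ X ∈ T, IsSub X) (hmeet : ∀ U ⊆ T, ⋂₀ U ∈ T)
    (hjoin : ∀ U ⊆ T, subGen (⋃₀ U) ∈ T) {c₁ c₂ d : S} (hd : d ∈ closureIn T (c₁ ⊓ c₂)) :
    ∃ d₁ ∈ closureIn T c₁, ∃ d₂ ∈ closureIn T c₂, d₁ ⊓ d₂ = d := by
  set J := subGen (closureIn T c₁ ∪ closureIn T c₂)
  have hJ : J ∈ T := by
    simpa only [Set.sUnion_pair] using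
      hjoin {closureIn T c₁, closureIn T c₂} (Set.pair_subset (closureIn_mem hmeet c₁)
        (closureIn_mem hmeet c₂))
  have hcJ : c₁ ⊓ c₂ ∈ J :=
    (hsub J hJ).2 _ (subset_subGen _ (Or.inl (mem_closureIn_self c₁)))
      _ (subset_subGen _ (Or.inr (mem_closureIn_self c₂)))
  exact subGen_union_subset_image2_inf (isSub_closureIn hsub c₁) (isSub_closureIn hsub c₂)
    (mem_closureIn.1 hd J hJ hcJ)

lemma singleton_top_mem (hjoin : ∀ U ⊆ T, subGen (⋃₀ U) ∈ T) : ({⊤} : Set S) ∈ T := by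
  simpa only [Set.sUnion_empty, subGen_empty] using hjoin ∅ (Set.empty_subset T)

lemma eq_subGen_sUnion_image_closureIn {X : Set S} (hX : IsSub X)
    (hclosed : ∀ c ∈ X, ∀ d, (∀ Y ∈ T, c ∈ Y → d ∈ Y) → d ∈ X) :
    X = subGen (⋃₀ (closureIn T '' X)) := by
  have hunion : ⋃₀ (closureIn T '' X) = X := by
    refine (Set.sUnion_subset ?_).antisymm fun c hc => ⟨_, ⟨c, hc, rfl⟩, mem_closureIn_self c⟩
    rintro _ ⟨c, hc, rfl⟩ d hd
    exact hclosed c hc d (mem_closureIn.1 hd)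
  rw [hunion, subGen_eq_self hX]

end

/-- Given a complete sublattice `T` of `Sub(S)` (closed under arbitrary
intersections and arbitrary joins of `Sub(S)`), the relation
`c ρ d ⟺ (∀ X ∈ T, c ∈ X → d ∈ X)` is a distributive quasi-order satisfying
conditions (3) and (4), and `T` is exactly the set of `ρ`-closed
subsemilattices. -/
theorem complete_sublattice_gives_distributive_qo (T : Set (Set S))
    (hsub : ∀ X ∈ T, IsSub X)
    (hmeet : ∀ U ⊆ T, ⋂₀ U ∈ T)
    (hjoin : ∀ U ⊆ T, subGen (⋃₀ U) ∈ T) :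
    IsDistributiveQO (fun c d => ∀ X ∈ T, c ∈ X → d ∈ X) ∧
    (∀ c d₁ d₂ : S, (∀ X ∈ T, c ∈ X → d₁ ∈ X) → (∀ X ∈ T, c ∈ X → d₂ ∈ X) →
      ∀ X ∈ T, c ∈ X → d₁ ⊓ d₂ ∈ X) ∧
    (∀ c : S, ∀ X ∈ T, c ∈ X → (⊤ : S) ∈ X) ∧
    T = {X : Set S | IsSub X ∧
      ∀ c ∈ X, ∀ d, (∀ Y ∈ T, c ∈ Y → d ∈ Y) → d ∈ X} := by
  have hdistrib : ∀ c₁ c₂ d : S, (∀ X ∈ T, c₁ ⊓ c₂ ∈ X → d ∈ X) →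
      ∃ d₁ d₂, (∀ X ∈ T, c₁ ∈ X → d₁ ∈ X) ∧ (∀ X ∈ T, c₂ ∈ X → d₂ ∈ X) ∧ d = d₁ ⊓ d₂ := by
    intro c₁ c₂ d hd
    obtain ⟨d₁, hd₁, d₂, hd₂, rfl⟩ :=
      exists_inf_of_mem_closureIn_inf hsub hmeet hjoin (mem_closureIn.2 hd)
    exact ⟨d₁, d₂, mem_closureIn.1 hd₁, mem_closureIn.1 hd₂, rfl⟩
  refine ⟨⟨fun c X _ hc => hc, fun a b c hab hbc X hX ha => hbc X hX (hab X hX ha), hdistrib,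
    fun d hd => hd {⊤} (singleton_top_mem hjoin) rfl⟩,
    fun c d₁ d₂ h₁ h₂ X hX hc => (hsub X hX).2 _ (h₁ X hX hc) _ (h₂ X hX hc),
    fun _ X hX _ => (hsub X hX).1, ?_⟩
  refine Set.Subset.antisymm (fun X hX => ⟨hsub X hX, fun c hc d hd => hd X hX hc⟩) ?_
  rintro X ⟨hX, hclosed⟩
  rw [eq_subGen_sUnion_image_closureIn hX hclosed]
  exact hjoin _ (Set.image_subset_iff.2 fun c _ => closureIn_mem hmeet c)
end

section
/- In the semilattice with operators Ω = ⟨ω, max, 0, p⟩, where p(0)=0 and p(n)=n−1 for n>0, the congruence lattice Con(Ω) is isomorphic to the ordinal ω + 1 (a countable chain with top). In particular, Con(Ω) is not coatomic. -/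
/-- The operator `p` on `⟨ℕ, max, 0⟩`: `p 0 = 0` and `p n = n - 1` for `n > 0`. -/
def pOp : ℕ → ℕ := fun n => n - 1

/-- A congruence of the semilattice with operator `Ω = ⟨ℕ, max, 0, p⟩`. -/
def IsCongOmega (θ : ℕ → ℕ → Prop) : Prop :=
  Equivalence θ ∧ (∀ x y z : ℕ, θ x y → θ (max x z) (max y z)) ∧
    ∀ x y : ℕ, θ x y → θ (pOp x) (pOp y)

/-- The congruence lattice of `Ω`, ordered by inclusion. -/
def ConOmega : Type :=
  {θ : ℕ → ℕ → Prop // IsCongOmega θ}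

instance : PartialOrder ConOmega := Subtype.partialOrder _

/-- The full congruence on `Ω`. -/
def fullCong : ℕ → ℕ → Prop := fun _ _ => True

/- ### Auxiliary material -/

/-- The congruence collapsing `[0,k]` and nothing else. -/
def cong (k : ℕ) : ℕ → ℕ → Prop := fun x y => x = y ∨ (x ≤ k ∧ y ≤ k)

lemma cong_isCong (k : ℕ) : IsCongOmega (cong k) := by
  refine ⟨⟨fun x => Or.inl rfl, ?_, ?_⟩, ?_, ?_⟩
  · rintro x y (rfl | ⟨h1, h2⟩)
    · exact Or.inl rfl
    · exact Or.inr ⟨h2, h1⟩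
  · rintro x y z (rfl | ⟨h1, h2⟩) (rfl | ⟨h3, h4⟩)
    · exact Or.inl rfl
    · exact Or.inr ⟨h3, h4⟩
    · exact Or.inr ⟨h1, h2⟩
    · exact Or.inr ⟨h1, h4⟩
  · rintro x y z (rfl | ⟨h1, h2⟩)
    · exact Or.inl rfl
    · rcases le_or_gt z k with h | h
      · exact Or.inr ⟨max_le h1 h, max_le h2 h⟩
      · exact Or.inl (by omega)
  · rintro x y (rfl | ⟨h1, h2⟩)
    · exact Or.inl rfl
    · exact Or.inr ⟨by simp only [pOp]; omega, by simp only [pOp]; omega⟩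

lemma full_isCong : IsCongOmega fullCong :=
  ⟨⟨fun _ => trivial, fun _ => trivial, fun _ _ => trivial⟩,
    fun _ _ _ _ => trivial, fun _ _ _ => trivial⟩

lemma cong_sub {θ : ℕ → ℕ → Prop} (h : IsCongOmega θ) {x y : ℕ} (hxy : θ x y) :
    ∀ j, θ (x - j) (y - j) := by
  intro j
  induction j with
  | zero => simpa using hxy
  | succ j ih =>
      have h2 := h.2.2 _ _ ih
      have e1 : pOp (x - j) = x - (j + 1) := by simp only [pOp]; omega
      have e2 : pOp (y - j) = y - (j + 1) := by simp only [pOp]; omega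
      rwa [e1, e2] at h2

/-- From a nontrivial pair we get `θ 0 y`. -/
lemma cong_zero {θ : ℕ → ℕ → Prop} (h : IsCongOmega θ) :
    ∀ x y : ℕ, θ x y → x < y → θ 0 y := by
  intro x
  induction x with
  | zero => intro y hxy _; exact hxy
  | succ x ih =>
      intro y hxy hlt
      have h1 : θ x (y - 1) := by
        have := cong_sub h hxy 1
        simpa using this
      have h2 : θ 0 (y - 1) := ih _ h1 (by omega)
      have h3 : θ (y - 1) y := by
        have := h.2.1 _ _ (y - 1) hxy
        have e1 : max (x + 1) (y - 1) = y - 1 := by omega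
        have e2 : max y (y - 1) = y := by omega
        rwa [e1, e2] at this
      exact h.1.trans h2 h3

/-- From `θ 0 y` all pairs below `y` are related. -/
lemma cong_pairs {θ : ℕ → ℕ → Prop} (h : IsCongOmega θ) {y : ℕ} (h0 : θ 0 y) :
    ∀ a b : ℕ, a ≤ y → b ≤ y → θ a b := by
  have key : ∀ a : ℕ, a ≤ y → θ a y := by
    intro a ha
    have := h.2.1 0 y a h0
    have e1 : max 0 a = a := by omega
    have e2 : max y a = y := by omega
    rwa [e1, e2] at this
  intro a b ha hb
  exact h.1.trans (key a ha) (h.1.symm (key b hb))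

open Classical in
/-- Classification of the congruences of `Ω`. -/
lemma cong_classify {θ : ℕ → ℕ → Prop} (h : IsCongOmega θ) :
    θ = fullCong ∨ ∃ k, θ = cong k := by
  by_cases hall : ∀ k, θ 0 k
  · left
    funext a b
    have hab : θ a b :=
      cong_pairs h (hall (max a b)) a b (le_max_left _ _) (le_max_right _ _)
    simp [fullCong, hab]
  · right
    push_neg at hall
    have hex : ∃ n, ¬ θ 0 n := hall
    set n := Nat.find hex with hn_def
    have hn : ¬ θ 0 n := Nat.find_spec hex
    have hnpos : 0 < n := by
      rcases Nat.eq_zero_or_pos n with h0 | h0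
      · exact absurd (h0 ▸ h.1.refl 0) hn
      · exact h0
    have hlt : ∀ m, m < n → θ 0 m := by
      intro m hm
      by_contra hc
      have : Nat.find hex ≤ m := Nat.find_le hc
      omega
    refine ⟨n - 1, ?_⟩
    funext a b
    apply propext
    constructor
    · intro hab
      rcases Nat.lt_trichotomy a b with hab' | rfl | hab'
      · have h0b : θ 0 b := cong_zero h a b hab hab'
        have hbn : b < n := by
          by_contra hc
          exact hn (cong_pairs h h0b 0 n (by omega) (by omega))
        exact Or.inr ⟨by omega, by omega⟩
      · exact Or.inl rfl
      · have h0a : θ 0 a := cong_zero h b a (h.1.symm hab) hab'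
        have han : a < n := by
          by_contra hc
          exact hn (cong_pairs h h0a 0 n (by omega) (by omega))
        exact Or.inr ⟨by omega, by omega⟩
    · rintro (rfl | ⟨h1, h2⟩)
      · exact h.1.refl a
      · exact cong_pairs h (hlt (n - 1) (by omega)) a b h1 h2

lemma cong_ne_full (k : ℕ) : cong k ≠ fullCong := by
  intro hcontra
  have h : cong k 0 (k + 1) := by rw [hcontra]; trivial
  rcases h with h | ⟨_, h⟩ <;> omega

lemma cong_le_cong {k m : ℕ} (h : k ≤ m) : cong k ≤ cong m := by
  intro x y hxy
  rcases hxy with rfl | ⟨h1, h2⟩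
  · exact Or.inl rfl
  · exact Or.inr ⟨le_trans h1 h, le_trans h2 h⟩

lemma cong_injective : Function.Injective cong := by
  intro k m hkm
  by_contra hne
  rcases Nat.lt_or_ge k m with h | h
  · have hh : cong k 0 m := by rw [hkm]; exact Or.inr ⟨Nat.zero_le _, le_refl _⟩
    rcases hh with h' | ⟨_, h'⟩ <;> omega
  · have hlt : m < k := by omega
    have hh : cong m 0 k := by rw [← hkm]; exact Or.inr ⟨Nat.zero_le _, le_refl _⟩
    rcases hh with h' | ⟨_, h'⟩ <;> omega

/-- The map `WithTop ℕ → ConOmega`. -/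
def congMap : WithTop ℕ → ConOmega
  | ⊤ => ⟨fullCong, full_isCong⟩
  | (k : ℕ) => ⟨cong k, cong_isCong k⟩

lemma congMap_strictMono : StrictMono congMap := by
  intro a b hab
  match a, b with
  | ⊤, _ => exact absurd hab (by simp)
  | (k : ℕ), ⊤ =>
      refine lt_of_le_of_ne (fun x y _ => trivial) ?_
      intro hcontra
      exact cong_ne_full k (congr_arg Subtype.val hcontra)
  | (k : ℕ), (m : ℕ) =>
      have hkm : k < m := by exact_mod_cast hab
      refine lt_of_le_of_ne (cong_le_cong hkm.le) ?_
      intro hcontra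
      exact absurd (cong_injective (congr_arg Subtype.val hcontra)) hkm.ne

lemma congMap_surjective : Function.Surjective congMap := by
  rintro ⟨θ, hθ⟩
  rcases cong_classify hθ with rfl | ⟨k, rfl⟩
  · exact ⟨⊤, rfl⟩
  · exact ⟨(k : WithTop ℕ), rfl⟩

/-- `Con(Ω) ≅ ω + 1`, and in particular `Con(Ω)` is not coatomic: there is a
congruence below the top with no coatom of `Con(Ω)` above it. -/
theorem conOmega_iso_omega_succ_and_not_coatomic :
    Nonempty (ConOmega ≃o WithTop ℕ) ∧
    ∃ θ : ℕ → ℕ → Prop, IsCongOmega θ ∧ θ ≠ fullCong ∧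
      ¬ ∃ c : ℕ → ℕ → Prop, IsCongOmega c ∧ θ ≤ c ∧ c ≠ fullCong ∧
        (∀ d : ℕ → ℕ → Prop, IsCongOmega d → c ≤ d → d = c ∨ d = fullCong) := by
  constructor
  · exact ⟨(StrictMono.orderIsoOfSurjective congMap congMap_strictMono
      congMap_surjective).symm⟩
  · refine ⟨cong 0, cong_isCong 0, cong_ne_full 0, ?_⟩
    rintro ⟨c, hc, _, hcne, hmax⟩
    rcases cong_classify hc with rfl | ⟨k, rfl⟩
    · exact hcne rfl
    · rcases hmax (cong (k + 1)) (cong_isCong (k + 1)) (cong_le_cong (by omega)) with h | h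
      · exact absurd (cong_injective h) (by omega)
      · exact cong_ne_full (k + 1) h
end

section
/- Let S = ⟨S,+,0,F⟩ be a semilattice with operators such that for every F-closed ideal I, every f ∈ F and every x ∈ S, f(x) ∈ I implies x ∈ I. Then for every F-closed ideal I of S with I ≠ S, the greatest congruence τ(I) with 0-class I is the partition of S into the two blocks I and S∖I, and hence τ(I) is a coatom of Con(S,+,0,F). -/
variable {S : Type*} [SemilatticeSup S] [OrderBot S]

/-- Suppose every operator `f ∈ F` reflects membership in `F`-closed ideals:
`f x ∈ I → x ∈ I`.  Then for every proper `F`-closed ideal `I`, the greatest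
congruence `τ(I)` with `0`-class `I` is the two-block partition `{I, S∖I}`,
and `τ(I)` is a coatom of the congruence lattice. -/
theorem tauRel_two_blocks_coatom (F : Set (S → S)) (hF : ∀ f ∈ F, IsOperator f)
    (hrefl : ∀ I : Order.Ideal S, (∀ f ∈ F, ∀ x ∈ I, f x ∈ I) →
      ∀ f ∈ F, ∀ x : S, f x ∈ I → x ∈ I)
    (I : Order.Ideal S) (hI : ∀ f ∈ F, ∀ x ∈ I, f x ∈ I)
    (hproper : (I : Set S) ≠ Set.univ) :
    tauRel F I = (fun x y => (x ∈ I ↔ y ∈ I)) ∧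
    IsCong F (tauRel F I) ∧
    tauRel F I ≠ (fun _ _ => True) ∧
    ∀ ψ : S → S → Prop, IsCong F ψ → (∀ x y, tauRel F I x y → ψ x y) →
      ψ = tauRel F I ∨ ψ = (fun _ _ => True) := by

  -- every element of the monoid reflects and preserves membership in `I`
  have key : ∀ h : S → S, InMonoid F h → ∀ x : S, h x ∈ I ↔ x ∈ I := by
    intro h hh
    induction hh with
    | id => intro x; rfl
    | base f hf => intro x; exact ⟨hrefl I hI f hf x, hI f hf x⟩
    | comp f g _ _ ihf ihg =>
        intro x
        exact (ihf (g x)).trans (ihg x)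
  have htau : tauRel F I = (fun x y => (x ∈ I ↔ y ∈ I)) := by
    funext x y
    apply propext
    constructor
    · intro hxy; exact hxy id InMonoid.id
    · intro hxy h hh; exact (key h hh x).trans (hxy.trans (key h hh y).symm)
  have hcong : IsCong F (tauRel F I) := by
    rw [htau]
    refine ⟨⟨fun x => Iff.rfl, fun h => h.symm, fun h h' => h.trans h'⟩, ?_, ?_⟩
    · intro x y z hxy
      have sup_iff : ∀ a : S, a ⊔ z ∈ I ↔ (a ∈ I ∧ z ∈ I) := by
        intro a
        constructor
        · intro h; exact ⟨I.lower le_sup_left h, I.lower le_sup_right h⟩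
        · intro h; exact Order.Ideal.sup_mem h.1 h.2
      rw [sup_iff, sup_iff]
      exact and_congr_left fun _ => hxy
    · intro f hf x y hxy
      exact (key f (InMonoid.base f hf) x).trans (hxy.trans (key f (InMonoid.base f hf) y).symm)
  obtain ⟨b, hb⟩ : ∃ b : S, b ∉ I := by
    by_contra h
    push_neg at h
    exact hproper (Set.eq_univ_of_forall h)
  have hne : tauRel F I ≠ (fun _ _ => True) := by
    intro h
    have : tauRel F I (⊥ : S) b := by rw [h]; trivial
    rw [htau] at this
    exact hb (this.1 I.bot_mem)
  refine ⟨htau, hcong, hne, ?_⟩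
  intro ψ hψ hsub
  by_cases hcross : ∃ a c : S, ψ a c ∧ a ∈ I ∧ c ∉ I
  · right
    obtain ⟨a, c, hac, haI, hcI⟩ := hcross
    funext x y
    apply propext
    constructor
    · intro _; trivial
    · intro _
      by_cases hx : x ∈ I <;> by_cases hy : y ∈ I
      · exact hsub x y (by rw [htau]; simp [hx, hy])
      · have h1 : ψ x a := hsub x a (by rw [htau]; simp [hx, haI])
        have h2 : ψ c y := hsub c y (by rw [htau]; simp [hcI, hy])
        exact hψ.1.trans h1 (hψ.1.trans hac h2)
      · have h1 : ψ x c := hsub x c (by rw [htau]; simp [hx, hcI])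
        have h2 : ψ a y := hsub a y (by rw [htau]; simp [haI, hy])
        exact hψ.1.trans h1 (hψ.1.trans (hψ.1.symm hac) h2)
      · exact hsub x y (by rw [htau]; simp [hx, hy])
  · left
    push_neg at hcross
    funext x y
    apply propext
    constructor
    · intro hxy
      rw [htau]
      exact ⟨fun hx => hcross x y hxy hx, fun hy => hcross y x (hψ.1.symm hxy) hy⟩
    · exact hsub x y
end
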